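/- Strict monotonicity under strict stochastic dominance: under the benchmark setup, assume additionally that q is continuous and strictly positive on I₂. Let φ_a and φ_b be two cash-flow densities (each continuous and positive exactly on an open interval) with CDFs satisfying F_a(t) ≥ F_b(t) for all t ∈ ℝ and F_a(t₀) > F_b(t₀) for some t₀, and assume both portfolio-value integrals are finite. Then V(φ_a) < V(φ_b). -/

import Mathlib

/-!
Substituting `y = K x` turns the portfolio value into `∫_{I₂} L y * q y`, where
`L = F₁⁻¹ ∘ F₂` is the inverse of the binding map. Stochastic dominance `F_b ≤ F_a` gives
`L_a ≤ L_b` on `I₂`, with strict inequality at the point `y₀` where `F₂ y₀` is the midpoint of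
`F_b t₀` and `F_a t₀`. Since `L_a`, `L_b` and `q` are continuous at `y₀` and `q > 0` on `I₂`, the
integrands differ by a positive amount on a neighbourhood of `y₀`.
-/

open MeasureTheory Set Filter

/-- The cumulative distribution function of a density `φ` (w.r.t. Lebesgue measure). -/
noncomputable def cdfOf (φ : ℝ → ℝ) (x : ℝ) : ℝ := ∫ t in Set.Iic x, φ t

open Topology Function

section cdfOf

variable {φ : ℝ → ℝ}

lemma cdfOf_sub_cdfOf (hi : Integrable φ) (a b : ℝ) :
    cdfOf φ b - cdfOf φ a = ∫ x in a..b, φ x :=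
  intervalIntegral.integral_Iic_sub_Iic hi.integrableOn hi.integrableOn

lemma hasDerivAt_cdfOf (hi : Integrable φ) {x : ℝ} (hx : ContinuousAt φ x) :
    HasDerivAt (cdfOf φ) (φ x) x := by
  have h := (intervalIntegral.integral_hasDerivAt_right (a := 0) hi.intervalIntegrable
    hi.aestronglyMeasurable.stronglyMeasurableAtFilter hx).const_add (cdfOf φ 0)
  refine h.congr_of_eventuallyEq (Eventually.of_forall fun b => ?_)
  simp only [← cdfOf_sub_cdfOf hi 0 b, add_sub_cancel]

lemma continuous_cdfOf (hi : Integrable φ) (hc : Continuous φ) : Continuous (cdfOf φ) :=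
  continuous_iff_continuousAt.2 fun _ => (hasDerivAt_cdfOf hi hc.continuousAt).continuousAt

lemma monotone_cdfOf (hi : Integrable φ) (hnn : ∀ x, 0 ≤ φ x) : Monotone (cdfOf φ) :=
  fun a b hab => sub_nonneg.1 <| by
    rw [cdfOf_sub_cdfOf hi]
    exact intervalIntegral.integral_nonneg hab fun x _ => hnn x

lemma cdfOf_lt_cdfOf (hi : Integrable φ) {u v : ℝ} (huv : u < v)
    (hpos : ∀ x ∈ Ioo u v, 0 < φ x) : cdfOf φ u < cdfOf φ v :=
  sub_pos.1 <| by
    rw [cdfOf_sub_cdfOf hi]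
    exact intervalIntegral.intervalIntegral_pos_of_pos_on hi.intervalIntegrable hpos huv

lemma tendsto_cdfOf_atBot : Tendsto (cdfOf φ) atBot (𝓝 0) :=
  tendsto_integral_Iic_zero tendsto_id

lemma tendsto_cdfOf_atTop (hi : Integrable φ) : Tendsto (cdfOf φ) atTop (𝓝 (∫ x, φ x)) :=
  (aecover_Iic tendsto_id).integral_tendsto_of_countably_generated hi

end cdfOf

structure IsIntervalDensity (φ : ℝ → ℝ) (I : Set ℝ) : Prop where
  continuous : Continuous φ
  nonneg : ∀ x, 0 ≤ φ x
  integrable : Integrable φ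
  integral_eq_one : ∫ x, φ x = 1
  isOpen : IsOpen I
  ordConnected : I.OrdConnected
  pos_iff : ∀ x, 0 < φ x ↔ x ∈ I

namespace IsIntervalDensity

variable {φ : ℝ → ℝ} {I : Set ℝ}

lemma eq_zero_of_notMem (h : IsIntervalDensity φ I) {x : ℝ} (hx : x ∉ I) : φ x = 0 :=
  le_antisymm (not_lt.1 (mt (h.pos_iff x).1 hx)) (h.nonneg x)

lemma monotone_cdfOf (h : IsIntervalDensity φ I) : Monotone (cdfOf φ) :=
  _root_.monotone_cdfOf h.integrable h.nonneg

lemma cdfOf_nonneg (h : IsIntervalDensity φ I) (x : ℝ) : 0 ≤ cdfOf φ x :=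
  h.monotone_cdfOf.le_of_tendsto tendsto_cdfOf_atBot x

lemma cdfOf_le_one (h : IsIntervalDensity φ I) (x : ℝ) : cdfOf φ x ≤ 1 :=
  h.integral_eq_one ▸ h.monotone_cdfOf.ge_of_tendsto (tendsto_cdfOf_atTop h.integrable) x

lemma cdfOf_lt_cdfOf_of_left_mem (h : IsIntervalDensity φ I) {u v : ℝ} (huv : u < v)
    (hu : u ∈ I) : cdfOf φ u < cdfOf φ v := by
  obtain ⟨w, huw, hw⟩ := exists_Ico_subset_of_mem_nhds (h.isOpen.mem_nhds hu) ⟨v, huv⟩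
  calc cdfOf φ u < cdfOf φ (min v w) :=
        cdfOf_lt_cdfOf h.integrable (lt_min huv huw) fun x hx =>
          (h.pos_iff x).2 (hw ⟨hx.1.le, hx.2.trans_le (min_le_right v w)⟩)
    _ ≤ cdfOf φ v := h.monotone_cdfOf (min_le_left v w)

lemma cdfOf_lt_cdfOf_of_right_mem (h : IsIntervalDensity φ I) {u v : ℝ} (huv : u < v)
    (hv : v ∈ I) : cdfOf φ u < cdfOf φ v := by
  obtain ⟨w, hwv, hw⟩ := exists_Ioc_subset_of_mem_nhds (h.isOpen.mem_nhds hv) ⟨u, huv⟩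
  calc cdfOf φ u ≤ cdfOf φ (max u w) := h.monotone_cdfOf (le_max_left u w)
    _ < cdfOf φ v :=
        cdfOf_lt_cdfOf h.integrable (max_lt huv hwv) fun x hx =>
          (h.pos_iff x).2 (hw ⟨(le_max_right u w).trans_lt hx.1, hx.2.le⟩)

lemma strictMonoOn_cdfOf (h : IsIntervalDensity φ I) : StrictMonoOn (cdfOf φ) I :=
  fun _ hu _ _ huv => h.cdfOf_lt_cdfOf_of_left_mem huv hu

lemma mapsTo_cdfOf (h : IsIntervalDensity φ I) : MapsTo (cdfOf φ) I (Ioo 0 1) := fun x hx =>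
  ⟨(h.cdfOf_nonneg (x - 1)).trans_lt (h.cdfOf_lt_cdfOf_of_right_mem (sub_one_lt x) hx),
    (h.cdfOf_lt_cdfOf_of_left_mem (lt_add_one x) hx).trans_le (h.cdfOf_le_one (x + 1))⟩

lemma mem_of_cdfOf_mem_Ioo (h : IsIntervalDensity φ I) {x : ℝ}
    (hx : cdfOf φ x ∈ Ioo 0 1) : x ∈ I := by
  by_contra hxI
  -- off the interval `I` the CDF is `0` (left of `I`) or `1` (right of `I`)
  have hside : (∀ t ∈ I, x < t) ∨ ∀ t ∈ I, t < x := by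
    by_contra! hc
    obtain ⟨⟨u, hu, hux⟩, v, hv, hxv⟩ := hc
    exact hxI (h.ordConnected.out hu hv ⟨hux, hxv⟩)
  rcases hside with hright | hleft
  · have hzero : cdfOf φ x = 0 :=
      setIntegral_eq_zero_of_forall_eq_zero fun t ht =>
        h.eq_zero_of_notMem fun htI => (hright t htI).not_ge ht
    exact hx.1.ne' hzero
  · have hzero : ∫ t in Ioi x, φ t = 0 :=
      setIntegral_eq_zero_of_forall_eq_zero fun t ht =>
        h.eq_zero_of_notMem fun htI => (hleft t htI).not_gt ht
    have hsplit := intervalIntegral.integral_Iic_add_Ioi (f := φ) (b := x)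
      h.integrable.integrableOn h.integrable.integrableOn
    rw [hzero, add_zero, h.integral_eq_one] at hsplit
    exact hx.2.ne hsplit

lemma surjOn_cdfOf (h : IsIntervalDensity φ I) : SurjOn (cdfOf φ) I (Ioo 0 1) := by
  intro p hp
  obtain ⟨a, ha⟩ := (tendsto_cdfOf_atBot.eventually (eventually_le_nhds hp.1)).exists
  obtain ⟨b, hb⟩ := ((h.integral_eq_one ▸ tendsto_cdfOf_atTop h.integrable).eventually
    (eventually_ge_nhds hp.2)).exists
  obtain ⟨x, rfl⟩ := mem_range_of_exists_le_of_exists_ge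
    (continuous_cdfOf h.integrable h.continuous) ⟨a, ha⟩ ⟨b, hb⟩
  exact ⟨x, h.mem_of_cdfOf_mem_Ioo hp, rfl⟩

lemma bijOn_cdfOf (h : IsIntervalDensity φ I) : BijOn (cdfOf φ) I (Ioo 0 1) :=
  ⟨h.mapsTo_cdfOf, h.strictMonoOn_cdfOf.injOn, h.surjOn_cdfOf⟩

lemma invFunOn_cdfOf_mem (h : IsIntervalDensity φ I) {p : ℝ} (hp : p ∈ Ioo 0 1) :
    invFunOn (cdfOf φ) I p ∈ I :=
  h.surjOn_cdfOf.mapsTo_invFunOn hp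

lemma cdfOf_invFunOn (h : IsIntervalDensity φ I) {p : ℝ} (hp : p ∈ Ioo 0 1) :
    cdfOf φ (invFunOn (cdfOf φ) I p) = p :=
  h.surjOn_cdfOf.rightInvOn_invFunOn hp

lemma invFunOn_cdfOf (h : IsIntervalDensity φ I) {x : ℝ} (hx : x ∈ I) :
    invFunOn (cdfOf φ) I (cdfOf φ x) = x :=
  h.strictMonoOn_cdfOf.injOn.leftInvOn_invFunOn hx

lemma image_invFunOn_cdfOf (h : IsIntervalDensity φ I) :
    invFunOn (cdfOf φ) I '' Ioo 0 1 = I :=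
  (h.bijOn_cdfOf.symm h.bijOn_cdfOf.invOn_invFunOn.symm).image_eq

lemma monotoneOn_invFunOn_cdfOf (h : IsIntervalDensity φ I) :
    MonotoneOn (invFunOn (cdfOf φ) I) (Ioo 0 1) := fun p hp p' hp' hpp' =>
  (h.strictMonoOn_cdfOf.le_iff_le (h.invFunOn_cdfOf_mem hp) (h.invFunOn_cdfOf_mem hp')).1
    (by rwa [h.cdfOf_invFunOn hp, h.cdfOf_invFunOn hp'])

lemma continuousAt_invFunOn_cdfOf (h : IsIntervalDensity φ I) {p : ℝ} (hp : p ∈ Ioo 0 1) :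
    ContinuousAt (invFunOn (cdfOf φ) I) p :=
  continuousAt_of_monotoneOn_of_image_mem_nhds h.monotoneOn_invFunOn_cdfOf
    (isOpen_Ioo.mem_nhds hp)
    (by rw [h.image_invFunOn_cdfOf]; exact h.isOpen.mem_nhds (h.invFunOn_cdfOf_mem hp))

lemma hasDerivAt_invFunOn_cdfOf (h : IsIntervalDensity φ I) {p : ℝ} (hp : p ∈ Ioo 0 1) :
    HasDerivAt (invFunOn (cdfOf φ) I) (φ (invFunOn (cdfOf φ) I p))⁻¹ p :=
  (hasDerivAt_cdfOf h.integrable h.continuous.continuousAt).of_local_left_inverse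
    (h.continuousAt_invFunOn_cdfOf hp) ((h.pos_iff _).2 (h.invFunOn_cdfOf_mem hp)).ne'
    (eventually_of_mem (isOpen_Ioo.mem_nhds hp) fun _ hp' => h.cdfOf_invFunOn hp')

lemma invFunOn_cdfOf_le_invFunOn_cdfOf {ψ : ℝ → ℝ} {J : Set ℝ} (h : IsIntervalDensity φ I)
    (hψ : IsIntervalDensity ψ J) (hdom : ∀ t, cdfOf ψ t ≤ cdfOf φ t) {p : ℝ}
    (hp : p ∈ Ioo 0 1) : invFunOn (cdfOf φ) I p ≤ invFunOn (cdfOf ψ) J p := by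
  by_contra! hlt
  refine lt_irrefl p ?_
  calc p = cdfOf ψ (invFunOn (cdfOf ψ) J p) := (hψ.cdfOf_invFunOn hp).symm
    _ ≤ cdfOf φ (invFunOn (cdfOf ψ) J p) := hdom _
    _ < cdfOf φ (invFunOn (cdfOf φ) I p) :=
        h.cdfOf_lt_cdfOf_of_right_mem hlt (h.invFunOn_cdfOf_mem hp)
    _ = p := h.cdfOf_invFunOn hp

lemma exists_invFunOn_cdfOf_lt_invFunOn_cdfOf {ψ : ℝ → ℝ} {J : Set ℝ}
    (h : IsIntervalDensity φ I) (hψ : IsIntervalDensity ψ J) {t₀ : ℝ}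
    (ht₀ : cdfOf ψ t₀ < cdfOf φ t₀) :
    ∃ p ∈ Ioo 0 1, invFunOn (cdfOf φ) I p < invFunOn (cdfOf ψ) J p := by
  set p := (cdfOf ψ t₀ + cdfOf φ t₀) / 2 with hp_def
  have hp : p ∈ Ioo 0 1 :=
    ⟨by linarith [hψ.cdfOf_nonneg t₀], by linarith [h.cdfOf_le_one t₀]⟩
  refine ⟨p, hp, lt_trans (b := t₀) ?_ ?_⟩
  · exact h.monotone_cdfOf.reflect_lt (by rw [h.cdfOf_invFunOn hp]; linarith)
  · exact hψ.monotone_cdfOf.reflect_lt (by rw [hψ.cdfOf_invFunOn hp]; linarith)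

end IsIntervalDensity

/-- `K` is the binding map `F₂⁻¹ ∘ F₁`, characterised pointwise on `I₁`. -/
def IsBindingMap (φ₁ φ₂ : ℝ → ℝ) (I₁ I₂ : Set ℝ) (K : ℝ → ℝ) : Prop :=
  ∀ x ∈ I₁, K x ∈ I₂ ∧ cdfOf φ₂ (K x) = cdfOf φ₁ x

namespace IsBindingMap

variable {φ₁ φ₂ : ℝ → ℝ} {I₁ I₂ : Set ℝ} {K : ℝ → ℝ}

lemma eqOn_invFunOn_comp (hK : IsBindingMap φ₁ φ₂ I₁ I₂ K) (h₂ : IsIntervalDensity φ₂ I₂) :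
    EqOn K (invFunOn (cdfOf φ₂) I₂ ∘ cdfOf φ₁) I₁ := fun x hx => by
  rw [comp_apply, ← (hK x hx).2, h₂.invFunOn_cdfOf (hK x hx).1]

lemma hasDerivAt (hK : IsBindingMap φ₁ φ₂ I₁ I₂ K) (h₁ : IsIntervalDensity φ₁ I₁)
    (h₂ : IsIntervalDensity φ₂ I₂) {x : ℝ} (hx : x ∈ I₁) :
    HasDerivAt K (φ₁ x / φ₂ (K x)) x := by
  have hG := (h₂.hasDerivAt_invFunOn_cdfOf (h₁.mapsTo_cdfOf hx)).comp x
    (hasDerivAt_cdfOf h₁.integrable h₁.continuous.continuousAt)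
  have hKx : invFunOn (cdfOf φ₂) I₂ (cdfOf φ₁ x) = K x := (hK.eqOn_invFunOn_comp h₂ hx).symm
  rw [div_eq_inv_mul, ← hKx]
  exact hG.congr_of_eventuallyEq
    (eventuallyEq_of_mem (h₁.isOpen.mem_nhds hx) (hK.eqOn_invFunOn_comp h₂))

lemma monotoneOn (hK : IsBindingMap φ₁ φ₂ I₁ I₂ K) (h₁ : IsIntervalDensity φ₁ I₁)
    (h₂ : IsIntervalDensity φ₂ I₂) : MonotoneOn K I₁ := fun x hx y hy hxy => by
  rw [hK.eqOn_invFunOn_comp h₂ hx, hK.eqOn_invFunOn_comp h₂ hy]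
  exact h₂.monotoneOn_invFunOn_cdfOf (h₁.mapsTo_cdfOf hx) (h₁.mapsTo_cdfOf hy)
    (h₁.monotone_cdfOf hxy)

lemma image_eq (hK : IsBindingMap φ₁ φ₂ I₁ I₂ K) (h₁ : IsIntervalDensity φ₁ I₁)
    (h₂ : IsIntervalDensity φ₂ I₂) : K '' I₁ = I₂ := by
  rw [(hK.eqOn_invFunOn_comp h₂).image_eq, image_comp, h₁.bijOn_cdfOf.image_eq,
    h₂.image_invFunOn_cdfOf]

lemma integrableOn_comp_iff (hK : IsBindingMap φ₁ φ₂ I₁ I₂ K) (h₁ : IsIntervalDensity φ₁ I₁)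
    (h₂ : IsIntervalDensity φ₂ I₂) (g : ℝ → ℝ) :
    IntegrableOn (fun x => φ₁ x / φ₂ (K x) * g (K x)) I₁ ↔ IntegrableOn g I₂ := by
  rw [← hK.image_eq h₁ h₂, integrableOn_image_iff_integrableOn_deriv_smul_of_monotoneOn
    h₁.isOpen.measurableSet (fun x hx => (hK.hasDerivAt h₁ h₂ hx).hasDerivWithinAt)
    (hK.monotoneOn h₁ h₂)]
  rfl

lemma setIntegral_comp (hK : IsBindingMap φ₁ φ₂ I₁ I₂ K) (h₁ : IsIntervalDensity φ₁ I₁)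
    (h₂ : IsIntervalDensity φ₂ I₂) (g : ℝ → ℝ) :
    ∫ x in I₁, φ₁ x / φ₂ (K x) * g (K x) = ∫ y in I₂, g y := by
  rw [← hK.image_eq h₁ h₂, integral_image_eq_integral_deriv_smul_of_monotoneOn
    h₁.isOpen.measurableSet (fun x hx => (hK.hasDerivAt h₁ h₂ hx).hasDerivWithinAt)
    (hK.monotoneOn h₁ h₂)]
  rfl

lemma eqOn_value_integrand (hK : IsBindingMap φ₁ φ₂ I₁ I₂ K) (h₁ : IsIntervalDensity φ₁ I₁)
    (q : ℝ → ℝ) :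
    EqOn (fun x => x * (φ₁ x / φ₂ (K x)) * q (K x))
      (fun x => φ₁ x / φ₂ (K x) * (invFunOn (cdfOf φ₁) I₁ (cdfOf φ₂ (K x)) * q (K x))) I₁ :=
  fun x hx => by
    simp only [(hK x hx).2, h₁.invFunOn_cdfOf hx]
    ring

lemma integrableOn_value_iff (hK : IsBindingMap φ₁ φ₂ I₁ I₂ K) (h₁ : IsIntervalDensity φ₁ I₁)
    (h₂ : IsIntervalDensity φ₂ I₂) (q : ℝ → ℝ) :
    IntegrableOn (fun x => x * (φ₁ x / φ₂ (K x)) * q (K x)) I₁ ↔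
      IntegrableOn (fun y => invFunOn (cdfOf φ₁) I₁ (cdfOf φ₂ y) * q y) I₂ := by
  rw [integrableOn_congr_fun (hK.eqOn_value_integrand h₁ q) h₁.isOpen.measurableSet,
    hK.integrableOn_comp_iff h₁ h₂ fun y => invFunOn (cdfOf φ₁) I₁ (cdfOf φ₂ y) * q y]

lemma setIntegral_value (hK : IsBindingMap φ₁ φ₂ I₁ I₂ K) (h₁ : IsIntervalDensity φ₁ I₁)
    (h₂ : IsIntervalDensity φ₂ I₂) (q : ℝ → ℝ) :
    ∫ x in I₁, x * (φ₁ x / φ₂ (K x)) * q (K x) =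
      ∫ y in I₂, invFunOn (cdfOf φ₁) I₁ (cdfOf φ₂ y) * q y := by
  rw [setIntegral_congr_fun h₁.isOpen.measurableSet (hK.eqOn_value_integrand h₁ q),
    hK.setIntegral_comp h₁ h₂ fun y => invFunOn (cdfOf φ₁) I₁ (cdfOf φ₂ y) * q y]

end IsBindingMap

theorem setIntegral_lt_setIntegral_of_continuousAt {X : Type*} [TopologicalSpace X]
    [MeasurableSpace X] {μ : Measure X} [μ.IsOpenPosMeasure] {s : Set X} {f g : X → ℝ}
    {x₀ : X} (hs : MeasurableSet s) (hx₀ : s ∈ 𝓝 x₀) (hf : IntegrableOn f s μ)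
    (hg : IntegrableOn g s μ) (hle : ∀ x ∈ s, f x ≤ g x) (hlt : f x₀ < g x₀)
    (hfc : ContinuousAt f x₀) (hgc : ContinuousAt g x₀) :
    ∫ x in s, f x ∂μ < ∫ x in s, g x ∂μ := by
  rw [← sub_pos, ← integral_sub hg hf, setIntegral_pos_iff_support_of_nonneg_ae
    ((ae_restrict_iff' hs).2 (Eventually.of_forall fun x hx => sub_nonneg.2 (hle x hx)))
    (hg.sub hf)]
  exact μ.measure_pos_of_mem_nhds
    (inter_mem ((hgc.sub hfc).eventually_ne (sub_ne_zero.2 hlt.ne')) hx₀)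

theorem stmt6_general
    (φ₂ q φa φb : ℝ → ℝ) (I₂ Ia Ib : Set ℝ)
    (hφ₂c : Continuous φ₂) (hφ₂nn : ∀ x, 0 ≤ φ₂ x)
    (hφ₂i : Integrable φ₂) (hφ₂1 : ∫ x, φ₂ x = 1)
    (hI₂o : IsOpen I₂) (hI₂conn : I₂.OrdConnected)
    (hpos₂ : ∀ x, 0 < φ₂ x ↔ x ∈ I₂)
    (hqc : ContinuousOn q I₂) (hqpos : ∀ y ∈ I₂, 0 < q y)
    (hφac : Continuous φa) (hφann : ∀ x, 0 ≤ φa x)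
    (hφai : Integrable φa) (hφa1 : ∫ x, φa x = 1)
    (hIao : IsOpen Ia) (hIaconn : Ia.OrdConnected)
    (hposa : ∀ x, 0 < φa x ↔ x ∈ Ia)
    (hφbc : Continuous φb) (hφbnn : ∀ x, 0 ≤ φb x)
    (hφbi : Integrable φb) (hφb1 : ∫ x, φb x = 1)
    (hIbo : IsOpen Ib) (hIbconn : Ib.OrdConnected)
    (hposb : ∀ x, 0 < φb x ↔ x ∈ Ib)
    (Ka Kb : ℝ → ℝ)
    (hKa : ∀ x ∈ Ia, Ka x ∈ I₂ ∧ cdfOf φ₂ (Ka x) = cdfOf φa x)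
    (hKb : ∀ x ∈ Ib, Kb x ∈ I₂ ∧ cdfOf φ₂ (Kb x) = cdfOf φb x)
    (hdom : ∀ t, cdfOf φb t ≤ cdfOf φa t)
    (hstrict : ∃ t₀, cdfOf φb t₀ < cdfOf φa t₀)
    (hinta : IntegrableOn (fun x => x * (φa x / φ₂ (Ka x)) * q (Ka x)) Ia)
    (hintb : IntegrableOn (fun x => x * (φb x / φ₂ (Kb x)) * q (Kb x)) Ib) :
    (∫ x in Ia, x * (φa x / φ₂ (Ka x)) * q (Ka x))
      < ∫ x in Ib, x * (φb x / φ₂ (Kb x)) * q (Kb x) := by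
  have h₂ : IsIntervalDensity φ₂ I₂ := ⟨hφ₂c, hφ₂nn, hφ₂i, hφ₂1, hI₂o, hI₂conn, hpos₂⟩
  have ha : IsIntervalDensity φa Ia := ⟨hφac, hφann, hφai, hφa1, hIao, hIaconn, hposa⟩
  have hb : IsIntervalDensity φb Ib := ⟨hφbc, hφbnn, hφbi, hφb1, hIbo, hIbconn, hposb⟩
  obtain ⟨t₀, ht₀⟩ := hstrict
  obtain ⟨p, hp, hlt⟩ := ha.exists_invFunOn_cdfOf_lt_invFunOn_cdfOf hb ht₀
  obtain ⟨y₀, hy₀, rfl⟩ := h₂.surjOn_cdfOf hp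
  have hcont : ∀ {φ : ℝ → ℝ} {I : Set ℝ}, IsIntervalDensity φ I →
      ContinuousAt (fun y => invFunOn (cdfOf φ) I (cdfOf φ₂ y) * q y) y₀ := fun h =>
    ((h.continuousAt_invFunOn_cdfOf hp).comp
      (continuous_cdfOf hφ₂i hφ₂c).continuousAt).mul (hqc.continuousAt (hI₂o.mem_nhds hy₀))
  rw [IsBindingMap.setIntegral_value hKa ha h₂, IsBindingMap.setIntegral_value hKb hb h₂]
  exact setIntegral_lt_setIntegral_of_continuousAt hI₂o.measurableSet (hI₂o.mem_nhds hy₀)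
    ((IsBindingMap.integrableOn_value_iff hKa ha h₂ q).1 hinta)
    ((IsBindingMap.integrableOn_value_iff hKb hb h₂ q).1 hintb)
    (fun y hy => mul_le_mul_of_nonneg_right
      (ha.invFunOn_cdfOf_le_invFunOn_cdfOf hb hdom (h₂.mapsTo_cdfOf hy)) (hqpos y hy).le)
    (mul_lt_mul_of_pos_right hlt (hqpos _ hy₀)) (hcont ha) (hcont hb)

/-- Strict monotonicity under strict stochastic dominance: with cash-flow
densities `φa`, `φb` (continuous, positive exactly on open intervals `Ia`, `Ib`) whose
CDFs satisfy `Fa ≥ Fb` pointwise and `Fa t₀ > Fb t₀` at some point `t₀`, with `q`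
continuous and strictly positive on `I₂`, and with finite portfolio values, one has
`V(φa) < V(φb)`. -/
theorem stmt6
    (φ₂ q φa φb : ℝ → ℝ) (I₂ Ia Ib : Set ℝ)
    (hφ₂c : Continuous φ₂) (hφ₂nn : ∀ x, 0 ≤ φ₂ x)
    (hφ₂i : Integrable φ₂) (hφ₂1 : ∫ x, φ₂ x = 1)
    (hI₂o : IsOpen I₂) (hI₂conn : I₂.OrdConnected)
    (hpos₂ : ∀ x, 0 < φ₂ x ↔ x ∈ I₂)
    (hqnn : ∀ y, 0 ≤ q y) (hqi : Integrable q)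
    (hqc : ContinuousOn q I₂) (hqpos : ∀ y ∈ I₂, 0 < q y)
    (hφac : Continuous φa) (hφann : ∀ x, 0 ≤ φa x)
    (hφai : Integrable φa) (hφa1 : ∫ x, φa x = 1)
    (hIao : IsOpen Ia) (hIaconn : Ia.OrdConnected)
    (hposa : ∀ x, 0 < φa x ↔ x ∈ Ia)
    (hφbc : Continuous φb) (hφbnn : ∀ x, 0 ≤ φb x)
    (hφbi : Integrable φb) (hφb1 : ∫ x, φb x = 1)
    (hIbo : IsOpen Ib) (hIbconn : Ib.OrdConnected)
    (hposb : ∀ x, 0 < φb x ↔ x ∈ Ib)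
    (Ka Kb : ℝ → ℝ)
    (hKa : ∀ x ∈ Ia, Ka x ∈ I₂ ∧ cdfOf φ₂ (Ka x) = cdfOf φa x)
    (hKb : ∀ x ∈ Ib, Kb x ∈ I₂ ∧ cdfOf φ₂ (Kb x) = cdfOf φb x)
    (hdom : ∀ t, cdfOf φb t ≤ cdfOf φa t)
    (hstrict : ∃ t₀, cdfOf φb t₀ < cdfOf φa t₀)
    (hinta : IntegrableOn (fun x => x * (φa x / φ₂ (Ka x)) * q (Ka x)) Ia)
    (hintb : IntegrableOn (fun x => x * (φb x / φ₂ (Kb x)) * q (Kb x)) Ib) :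
    (∫ x in Ia, x * (φa x / φ₂ (Ka x)) * q (Ka x))
      < ∫ x in Ib, x * (φb x / φ₂ (Kb x)) * q (Kb x) :=
  stmt6_general φ₂ q φa φb I₂ Ia Ib hφ₂c hφ₂nn hφ₂i hφ₂1 hI₂o hI₂conn hpos₂ hqc hqpos hφac hφann
    hφai hφa1 hIao hIaconn hposa hφbc hφbnn hφbi hφb1 hIbo hIbconn hposb Ka Kb hKa hKb hdom hstrict
    hinta hintb
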